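/- A d-dimensional subshift that is deterministic in every direction u ∈ ℝ^d \ {0} is a finite set, and hence only contains strongly periodic configurations. -/

import Mathlib

open scoped BigOperators

/-- A cell of the `d`-dimensional grid `ℤ^d`. -/
abbrev Cell (d : ℕ) := Fin d → ℤ

/-- A `d`-dimensional configuration with integer symbols. -/
abbrev Config (d : ℕ) := Cell d → ℤ

/-- Laurent polynomials in `d` variables with complex coefficients,
modelled as the monoid algebra of `ℤ^d` over `ℂ`. -/
abbrev LP (d : ℕ) := AddMonoidAlgebra ℂ (Cell d)

/-- The real (Euclidean) vector corresponding to an integer lattice vector. -/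
noncomputable def toR {d : ℕ} (v : Cell d) : EuclideanSpace ℝ (Fin d) :=
  WithLp.toLp 2 (fun i => (v i : ℝ))

/-- The formal product `f·c` of a Laurent polynomial and a configuration:
`(fc)_u = Σ_{v ∈ Supp(f)} f_v c_{u-v}`. -/
noncomputable def conv {d : ℕ} (f : LP d) (c : Config d) : Cell d → ℂ :=
  fun u => ∑ v ∈ f.coeff.support, f.coeff v * (c (u - v) : ℂ)

/-- `f` annihilates `c`: the formal product `f·c` is the zero power series. -/
def Annihilates {d : ℕ} (f : LP d) (c : Config d) : Prop :=
  ∀ u, conv f c u = 0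

/-- `t` is a vector of periodicity of `e`. -/
def IsPeriodOf {d : ℕ} {α : Type*} (e : Cell d → α) (t : Cell d) : Prop :=
  t ≠ 0 ∧ ∀ u, e (u + t) = e u

/-- `e` is strongly periodic: it has `d` vectors of periodicity that are
linearly independent over `ℝ`. -/
def StronglyPeriodic {d : ℕ} {α : Type*} (e : Cell d → α) : Prop :=
  ∃ T : Fin d → Cell d, (∀ i, IsPeriodOf e (T i)) ∧
    LinearIndependent ℝ (fun i => (fun j => ((T i j : ℤ) : ℝ)))

/-- `f` periodizes `c`: the formal product `f·c` is strongly periodic,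
i.e. `f ∈ Per(c)`. -/
def Periodizes {d : ℕ} (f : LP d) (c : Config d) : Prop :=
  StronglyPeriodic (conv f c)

/-- The translation of a configuration by `t`. -/
def shift {d : ℕ} (t : Cell d) (c : Config d) : Config d := fun u => c (u + t)

/-- A subshift: a set of configurations closed in the prodiscrete topology
and closed under translations. -/
def IsSubshift {d : ℕ} (X : Set (Config d)) : Prop :=
  IsClosed X ∧ ∀ c ∈ X, ∀ t : Cell d, shift t c ∈ X

/-- All configurations of `X` use symbols from one finite alphabet `A ⊆ ℤ`. -/
def FiniteAlphabet {d : ℕ} (X : Set (Config d)) : Prop :=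
  ∃ A : Finset ℤ, ∀ c ∈ X, ∀ u, c u ∈ A

/-- `f ∈ Ann(X)`: `f` annihilates every configuration of `X`. -/
def AnnX {d : ℕ} (f : LP d) (X : Set (Config d)) : Prop :=
  ∀ c ∈ X, Annihilates f c

/-- `f ∈ Per(X)`: `f` periodizes every configuration of `X`. -/
def PerX {d : ℕ} (f : LP d) (X : Set (Config d)) : Prop :=
  ∀ c ∈ X, Periodizes f c

/-- The difference binomial `x^t - 1`. -/
noncomputable def binom {d : ℕ} (t : Cell d) : LP d :=
  AddMonoidAlgebra.single t 1 - AddMonoidAlgebra.single 0 1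

/-- `X` is deterministic in the direction of `u`: the contents of a
configuration on the open discrete half space `H_u = {x ∈ ℤ^d : ⟨x,u⟩ < 0}`
determine the configuration completely. -/
def Deterministic {d : ℕ} (X : Set (Config d)) (u : EuclideanSpace ℝ (Fin d)) : Prop :=
  ∀ c ∈ X, ∀ c' ∈ X, (∀ x : Cell d, (inner ℝ (toR x) u : ℝ) < 0 → c x = c' x) → c = c'

/-- The `(d-1)`-dimensional subspace `S = ⟨u⟩^⊥` is expansive for `X`: `X` is
deterministic in the directions of both `u` and `-u`. -/
def ExpansiveSpace {d : ℕ} (X : Set (Config d))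
    (S : Submodule ℝ (EuclideanSpace ℝ (Fin d))) : Prop :=
  ∃ u : EuclideanSpace ℝ (Fin d), u ≠ 0 ∧ S = (Submodule.span ℝ {u})ᗮ ∧
    Deterministic X u ∧ Deterministic X (-u)

/-- Vectors `a` and `b` of `ℤ^d` are parallel. -/
def IsParallel {d : ℕ} (a b : Cell d) : Prop :=
  ∃ p q : ℤ, p ≠ 0 ∧ q ≠ 0 ∧ p • a = q • b

/-- A family of lattice vectors is pairwise linearly independent (over `ℝ`). -/
def PairwiseLinIndep {d m : ℕ} (t : Fin m → Cell d) : Prop :=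
  ∀ i j, i ≠ j → LinearIndependent ℝ ![toR (t i), toR (t j)]

/-- The set of `D`-patterns appearing in the configuration `c`. -/
def PattSetC {d : ℕ} (c : Config d) (D : Finset (Cell d)) : Set (D → ℤ) :=
  {p | ∃ t : Cell d, ∀ v : D, p v = c (t + v)}

/-- The set of `D`-patterns appearing in configurations of `X`. -/
def PattSet {d : ℕ} (X : Set (Config d)) (D : Finset (Cell d)) : Set (D → ℤ) :=
  {p | ∃ c ∈ X, ∃ t : Cell d, ∀ v : D, p v = c (t + v)}

/-- `c` is a tiling of `ℤ^d` by translations of the tile `D`: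
`c` is binary and every cell is covered exactly once, i.e.
`Σ_{v ∈ D} c_{u-v} = 1` for every `u`. -/
def IsTiling {d : ℕ} (D : Finset (Cell d)) (c : Config d) : Prop :=
  (∀ u, c u = 0 ∨ c u = 1) ∧ ∀ u : Cell d, ∑ v ∈ D, c (u - v) = 1

/-- The set `T_D` of all tilings of `ℤ^d` by translations of `D`. -/
def TilingSet {d : ℕ} (D : Finset (Cell d)) : Set (Config d) :=
  {c | IsTiling D c}

/-- The characteristic Laurent polynomial `f_D = Σ_{v ∈ D} x^v` of a finite shape. -/
noncomputable def charPoly {d : ℕ} (D : Finset (Cell d)) : LP d :=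
  ∑ v ∈ D, AddMonoidAlgebra.single v 1

/-- The radius-`r` Lee sphere `B_r^d = {v ∈ ℤ^d : |v 1| + ⋯ + |v d| ≤ r}`. -/
noncomputable def LeeSphere (d : ℕ) (r : ℤ) : Finset (Cell d) :=
  (Fintype.piFinset fun _ : Fin d => Finset.Icc (-r) r).filter fun v => ∑ i, |v i| ≤ r

/-!
Determinism in direction `u` is a statement about infinite half spaces, but compactness of `X`
turns it into a finite window `F ⊆ H_u`: the values of a configuration on `t + F` determine its
value at `t`. Covering the compact unit sphere by finitely many open cones on which such windows
still point strictly inwards yields finitely many windows with a uniform margin and a uniform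
size. Hence every lattice point far enough from the origin is determined by points strictly
closer to the origin, so a configuration of `X` is determined by its values on a fixed finite
ball, and `X` is finite. A finite shift-invariant set consists of strongly periodic
configurations, since the translates of `c` along each coordinate axis must repeat.
-/

open scoped InnerProductSpace

namespace Cell

variable {d : ℕ}

def normSq (x : Cell d) : ℕ := ∑ i, (x i).natAbs ^ 2

theorem sq_norm_toR (x : Cell d) : ‖toR x‖ ^ 2 = normSq x := by
  rw [EuclideanSpace.norm_eq, Real.sq_sqrt (by positivity)]
  simp [normSq, toR]

theorem toR_add (x y : Cell d) : toR (x + y) = toR x + toR y := by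
  ext i
  simp [toR]

theorem finite_setOf_normSq_le (M : ℕ) : {x : Cell d | normSq x ≤ M}.Finite := by
  refine (Set.finite_Icc (fun _ => -(M : ℤ)) fun _ => (M : ℤ)).subset fun x hx => ?_
  have hcoord : ∀ i, (x i).natAbs ≤ M := fun i =>
    calc (x i).natAbs ≤ (x i).natAbs ^ 2 := Nat.le_self_pow two_ne_zero _
      _ ≤ normSq x := Finset.single_le_sum (f := fun j => (x j).natAbs ^ 2)
          (fun _ _ => Nat.zero_le _) (Finset.mem_univ i)
      _ ≤ M := hx
  refine ⟨fun i => ?_, fun i => ?_⟩ <;> have := hcoord i <;> dsimp only <;> omega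

end Cell

section Windows

variable {d : ℕ}

def IsWindow (X : Set (Config d)) (F : Finset (Cell d)) : Prop :=
  ∀ t, ∀ c ∈ X, ∀ c' ∈ X, (∀ f ∈ F, c (f + t) = c' (f + t)) → c t = c' t

variable {X : Set (Config d)}

theorem FiniteAlphabet.isCompact (hX : IsClosed X) (hA : FiniteAlphabet X) : IsCompact X := by
  obtain ⟨A, hA⟩ := hA
  exact (isCompact_univ_pi fun _ : Cell d => A.finite_toSet.isCompact).of_isClosed_subset hX
    fun c hc u _ => hA c hc u

theorem Deterministic.exists_window_at_zero {u : EuclideanSpace ℝ (Fin d)} (hXc : IsCompact X)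
    (hdet : Deterministic X u) :
    ∃ F : Finset (Cell d), (∀ f ∈ F, ⟪toR f, u⟫_ℝ < 0) ∧
      ∀ c ∈ X, ∀ c' ∈ X, (∀ f ∈ F, c f = c' f) → c 0 = c' 0 := by
  let Disagree : Cell d → Set (Config d × Config d) := fun x => {p | p.1 x ≠ p.2 x}
  have hcont : ∀ x : Cell d, Continuous fun p : Config d × Config d => (p.1 x, p.2 x) :=
    fun x => by fun_prop
  have hopen : ∀ x, IsOpen (Disagree x) := fun x =>
    (isOpen_discrete {q : ℤ × ℤ | q.1 ≠ q.2}).preimage (hcont x)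
  let K := X ×ˢ X ∩ Disagree 0
  have hK : IsCompact K :=
    (hXc.prod hXc).inter_right ((isClosed_discrete {q : ℤ × ℤ | q.1 ≠ q.2}).preimage (hcont 0))
  have hcover : K ⊆ ⋃ x : {x : Cell d // ⟪toR x, u⟫_ℝ < 0}, Disagree x := by
    rintro ⟨c, c'⟩ ⟨⟨hc, hc'⟩, hne⟩
    by_contra hnot
    simp only [Set.mem_iUnion, not_exists] at hnot
    exact hne (congrFun (hdet c hc c' hc' fun x hx => not_not.1 (hnot ⟨x, hx⟩)) 0)
  obtain ⟨s, hs⟩ := hK.elim_finite_subcover (fun x : {x : Cell d // ⟪toR x, u⟫_ℝ < 0} => Disagree x)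
    (fun x => hopen x) hcover
  refine ⟨s.map (Function.Embedding.subtype _), fun f hf => ?_, fun c hc c' hc' hagree => ?_⟩
  · obtain ⟨x, -, rfl⟩ := Finset.mem_map.1 hf
    exact x.2
  by_contra hne
  obtain ⟨x, hxs, hx⟩ := Set.mem_iUnion₂.1 (hs (show (c, c') ∈ K from ⟨⟨hc, hc'⟩, hne⟩))
  exact hx (hagree x (Finset.mem_map_of_mem _ hxs))

theorem Deterministic.exists_window {u : EuclideanSpace ℝ (Fin d)} (hXc : IsCompact X)
    (hshift : ∀ c ∈ X, ∀ t, shift t c ∈ X) (hdet : Deterministic X u) :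
    ∃ F : Finset (Cell d), (∀ f ∈ F, ⟪toR f, u⟫_ℝ < 0) ∧ IsWindow X F := by
  obtain ⟨F, hneg, hF⟩ := hdet.exists_window_at_zero hXc
  refine ⟨F, hneg, fun t c hc c' hc' hagree => ?_⟩
  simpa [shift] using hF _ (hshift c hc t) _ (hshift c' hc' t) hagree

theorem exists_uniform_windows
    (hwin : ∀ v ∈ Metric.sphere (0 : EuclideanSpace ℝ (Fin d)) 1,
      ∃ F, IsWindow X F ∧ ∀ f ∈ F, ⟪toR f, v⟫_ℝ < 0) :
    ∃ N K : ℕ, ∀ v ∈ Metric.sphere (0 : EuclideanSpace ℝ (Fin d)) 1, ∃ F, IsWindow X F ∧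
      ∀ f ∈ F, 1 / ((N : ℝ) + 1) < -⟪toR f, v⟫_ℝ ∧ Cell.normSq f ≤ K := by
  let Cone : {F // IsWindow X F} × ℕ → Set (EuclideanSpace ℝ (Fin d)) :=
    fun p => ⋂ f ∈ p.1.1, {v | 1 / ((p.2 : ℝ) + 1) < -⟪toR f, v⟫_ℝ}
  have hopen : ∀ p, IsOpen (Cone p) := fun p =>
    isOpen_biInter_finset fun f _ => isOpen_lt continuous_const (by fun_prop)
  have hcover : Metric.sphere 0 1 ⊆ ⋃ p, Cone p := by
    intro v hv
    obtain ⟨F, hF, hneg⟩ := hwin v hv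
    have hmargin : ∀ᶠ n : ℕ in Filter.atTop, ∀ f ∈ F, 1 / ((n : ℝ) + 1) < -⟪toR f, v⟫_ℝ :=
      (Filter.eventually_all_finset F).2 fun f hf =>
        tendsto_one_div_add_atTop_nhds_zero_nat.eventually (gt_mem_nhds (neg_pos.2 (hneg f hf)))
    obtain ⟨n, hn⟩ := hmargin.exists
    exact Set.mem_iUnion.2 ⟨(⟨F, hF⟩, n), Set.mem_iInter₂.2 hn⟩
  obtain ⟨s, hs⟩ := (isCompact_sphere 0 1).elim_finite_subcover Cone hopen hcover
  refine ⟨s.sup Prod.snd, s.sup fun p => p.1.1.sup Cell.normSq, fun v hv => ?_⟩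
  obtain ⟨p, hp, hvp⟩ := Set.mem_iUnion₂.1 (hs hv)
  refine ⟨p.1.1, p.1.2, fun f hf => ⟨?_, ?_⟩⟩
  · refine lt_of_le_of_lt ?_ (Set.mem_iInter₂.1 hvp f hf)
    gcongr
    exact_mod_cast Finset.le_sup (f := Prod.snd) hp
  · exact (Finset.le_sup hf).trans (Finset.le_sup (f := fun p => p.1.1.sup Cell.normSq) hp)

theorem exists_descending_windows
    (hwin : ∀ v ∈ Metric.sphere (0 : EuclideanSpace ℝ (Fin d)) 1,
      ∃ F, IsWindow X F ∧ ∀ f ∈ F, ⟪toR f, v⟫_ℝ < 0) :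
    ∃ M : ℕ, ∀ x : Cell d, M < Cell.normSq x →
      ∃ F, IsWindow X F ∧ ∀ f ∈ F, Cell.normSq (f + x) < Cell.normSq x := by
  obtain ⟨N, K, huniform⟩ := exists_uniform_windows hwin
  refine ⟨(K * (N + 1)) ^ 2, fun x hx => ?_⟩
  have hfar : (K : ℝ) * (N + 1) < ‖toR x‖ := by
    refine lt_of_pow_lt_pow_left₀ 2 (norm_nonneg _) ?_
    rw [Cell.sq_norm_toR]
    exact_mod_cast hx
  have hx0 : 0 < ‖toR x‖ := lt_of_le_of_lt (by positivity) hfar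
  obtain ⟨F, hF, hFx⟩ := huniform (‖toR x‖⁻¹ • toR x) (by simp [norm_smul, hx0.ne'])
  refine ⟨F, hF, fun f hf => ?_⟩
  obtain ⟨hmargin, hfK⟩ := hFx f hf
  rw [real_inner_smul_right] at hmargin
  have hinner : ⟪toR f, toR x⟫_ℝ < -K := by
    have hN : (0 : ℝ) < N + 1 := by positivity
    have hscaled : ‖toR x‖ / (N + 1) < -⟪toR f, toR x⟫_ℝ :=
      calc ‖toR x‖ / (N + 1) = ‖toR x‖ * (1 / (N + 1)) := by ring
        _ < ‖toR x‖ * -(‖toR x‖⁻¹ * ⟪toR f, toR x⟫_ℝ) := mul_lt_mul_of_pos_left hmargin hx0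
        _ = -⟪toR f, toR x⟫_ℝ := by field_simp
    linarith [(lt_div_iff₀ hN).2 hfar]
  have hfK' : ‖toR f‖ ^ 2 ≤ K := by rw [Cell.sq_norm_toR]; exact_mod_cast hfK
  have hsq : ‖toR (f + x)‖ ^ 2 < ‖toR x‖ ^ 2 := by
    rw [Cell.toR_add, norm_add_sq_real]
    linarith
  rw [Cell.sq_norm_toR, Cell.sq_norm_toR] at hsq
  exact_mod_cast hsq

theorem eq_of_eqOn_normSq_le {M : ℕ}
    (hdesc : ∀ x : Cell d, M < Cell.normSq x →
      ∃ F, IsWindow X F ∧ ∀ f ∈ F, Cell.normSq (f + x) < Cell.normSq x)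
    {c c' : Config d} (hc : c ∈ X) (hc' : c' ∈ X)
    (hagree : Set.EqOn c c' {x | Cell.normSq x ≤ M}) : c = c' := by
  funext x
  induction x using (measure Cell.normSq).wf.induction with
  | _ x ih =>
    by_cases hx : Cell.normSq x ≤ M
    · exact hagree hx
    · obtain ⟨F, hF, hdec⟩ := hdesc x (not_le.1 hx)
      exact hF x c hc c' hc' fun f hf => ih _ (hdec f hf)

end Windows

section Periodicity

variable {d : ℕ}

theorem FiniteAlphabet.finite_of_eqOn {X : Set (Config d)} (hA : FiniteAlphabet X)
    {B : Set (Cell d)} (hB : B.Finite)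
    (hdet : ∀ c ∈ X, ∀ c' ∈ X, Set.EqOn c c' B → c = c') : X.Finite := by
  obtain ⟨A, hA⟩ := hA
  have : Finite B := hB.to_subtype
  refine Set.Finite.of_finite_image (f := B.domRestrict) ?_ fun c hc c' hc' h =>
    hdet c hc c' hc' fun x hx => congrFun h ⟨x, hx⟩
  refine (Set.Finite.pi (t := fun _ : B => (A : Set ℤ)) fun _ => A.finite_toSet).subset ?_
  rintro _ ⟨c, hc, rfl⟩ x -
  exact hA c hc x

theorem exists_period_of_finite_range_shift {c : Config d}
    (h : (Set.range fun t => shift t c).Finite) (v : Cell d) :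
    ∃ k : ℤ, k ≠ 0 ∧ ∀ u, c (u + k • v) = c u := by
  obtain ⟨a, b, hab, heq⟩ := h.exists_lt_map_eq_of_forall_mem
    (f := fun n : ℤ => shift (n • v) c) fun n => Set.mem_range_self (n • v)
  refine ⟨b - a, sub_ne_zero.2 hab.ne', fun u => ?_⟩
  have := congrFun heq (u - a • v)
  simp only [shift, sub_add_cancel] at this
  rw [this, sub_smul]
  abel_nf

theorem stronglyPeriodic_of_finite_range_shift {c : Config d}
    (h : (Set.range fun t => shift t c).Finite) : StronglyPeriodic c := by
  choose k hk0 hk using fun i : Fin d => exists_period_of_finite_range_shift h (Pi.single i 1)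
  refine ⟨fun i => k i • Pi.single i 1,
    fun i => ⟨fun h => hk0 i (by simpa using congrFun h i), hk i⟩, ?_⟩
  convert (Pi.basisFun ℝ (Fin d)).linearIndependent.units_smul
    fun i => Units.mk0 ((k i : ℤ) : ℝ) (Int.cast_ne_zero.2 (hk0 i)) using 1
  ext i j
  by_cases hij : j = i
  · subst hij; simp
  · simp [hij]

end Periodicity

/-- A `d`-dimensional subshift that is deterministic in every direction
is finite, and hence only contains strongly periodic configurations. -/
theorem stmt8 {d : ℕ} (X : Set (Config d)) (hX : IsSubshift X) (hA : FiniteAlphabet X)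
    (hdet : ∀ u : EuclideanSpace ℝ (Fin d), u ≠ 0 → Deterministic X u) :
    X.Finite ∧ ∀ c ∈ X, StronglyPeriodic c := by
  have hXc : IsCompact X := hA.isCompact hX.1
  have hwin : ∀ v ∈ Metric.sphere (0 : EuclideanSpace ℝ (Fin d)) 1,
      ∃ F, IsWindow X F ∧ ∀ f ∈ F, ⟪toR f, v⟫_ℝ < 0 := fun v hv =>
    have hv0 : v ≠ 0 := ne_zero_of_mem_sphere one_ne_zero ⟨v, hv⟩
    let ⟨F, hneg, hF⟩ := (hdet v hv0).exists_window hXc hX.2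
    ⟨F, hF, hneg⟩
  obtain ⟨M, hdesc⟩ := exists_descending_windows hwin
  have hfin : X.Finite := hA.finite_of_eqOn (Cell.finite_setOf_normSq_le M)
    fun c hc c' hc' => eq_of_eqOn_normSq_le hdesc hc hc'
  refine ⟨hfin, fun c hc => stronglyPeriodic_of_finite_range_shift (hfin.subset ?_)⟩
  rintro _ ⟨t, rfl⟩
  exact hX.2 c hc t
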